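/- arXiv:2305.01372 — 8 statements merged into one kernel-verified Lean document; each statement's English description precedes it below -/
import Mathlib

section
/- Let (F, r) be a faithful maniplex of rank n, let j ∈ Fin n, and let u and v be flags lying in the same j-face, i.e., v ∈ M_{Fin n ∖ {j}}(u). Then v is not j-adjacent to u, that is, v ≠ r_j u. -/
/-- The orbit of a flag `u` under the subgroup generated by `{r j : j ∈ J}`. -/
def MOrbit {n : ℕ} {F : Type*} (r : Fin n → Equiv.Perm F) (J : Set (Fin n)) (u : F) :
    Set F :=
  {v | ∃ g ∈ Subgroup.closure (r '' J), v = g u}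

/-- `(F, r)` is a maniplex of rank `n`. -/
def IsManiplex {F : Type*} (n : ℕ) (r : Fin n → Equiv.Perm F) : Prop :=
  Nonempty F ∧
  (∀ (i : Fin n) (u : F), r i (r i u) = u) ∧
  (∀ (i : Fin n) (u : F), r i u ≠ u) ∧
  (∀ u v : F, v ∈ MOrbit r Set.univ u) ∧
  ∀ i j : Fin n, 1 < |(i : ℤ) - (j : ℤ)| →
    (∀ u : F, r i (r j (r i (r j u))) = u) ∧ ∀ u : F, r i (r j u) ≠ u

/-- The `i`-face containing the flag `u`. -/
def MFace {n : ℕ} {F : Type*} (r : Fin n → Equiv.Perm F) (i : Fin n) (u : F) : Set F :=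
  MOrbit r {i}ᶜ u

/-- A maniplex is faithful if the intersection of all faces containing a flag is a singleton. -/
def IsFaithful {n : ℕ} {F : Type*} (r : Fin n → Equiv.Perm F) : Prop :=
  ∀ u : F, (⋂ i : Fin n, MFace r i u) = {u}

/-- `O` is a face of rank `k ∈ {-1, …, n}`, where the improper ranks `-1` and `n`
give the whole flag set. -/
def IsRankFace {n : ℕ} {F : Type*} (r : Fin n → Equiv.Perm F) (k : ℤ) (O : Set F) : Prop :=
  ((∃ i : Fin n, (i : ℤ) = k) ∧ ∃ u : F, O = MOrbit r {j : Fin n | (j : ℤ) ≠ k} u) ∨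
  ((¬ ∃ i : Fin n, (i : ℤ) = k) ∧ O = Set.univ)

/-- A maniplex is thin if any incident pair of an `(i-1)`-face and `(i+1)`-face lies in
exactly two `i`-faces. -/
def IsThin {n : ℕ} {F : Type*} (r : Fin n → Equiv.Perm F) : Prop :=
  ∀ (i : Fin n) (Fm Fp : Set F),
    IsRankFace r ((i : ℤ) - 1) Fm → IsRankFace r ((i : ℤ) + 1) Fp →
    (Fm ∩ Fp).Nonempty →
    ∃ O₁ O₂ : Set F, O₁ ≠ O₂ ∧
      {O : Set F | (∃ u : F, O = MFace r i u) ∧ (O ∩ (Fm ∩ Fp)).Nonempty} = {O₁, O₂}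

/-- The component intersection property. -/
def HasCIP {n : ℕ} {F : Type*} (r : Fin n → Equiv.Perm F) : Prop :=
  ∀ (k : ℕ) (j : Fin k → Fin n) (H : Fin k → Set F),
    Function.Injective j →
    (∀ l, ∃ u : F, H l = MFace r (j l) u) →
    (∀ l m, (H l ∩ H m).Nonempty) →
    ∀ u v : F, u ∈ ⋂ l, H l → v ∈ ⋂ l, H l →
      v ∈ MOrbit r {m : Fin n | m ∉ Set.range j} u

/-- An automorphism of a maniplex: a permutation of the flags commuting with every `r i`. -/
def IsManiplexAuto {n : ℕ} {F : Type*} (r : Fin n → Equiv.Perm F) (φ : Equiv.Perm F) : Prop :=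
  ∀ (i : Fin n) (u : F), φ (r i u) = r i (φ u)

/-- A maniplex is regular if its automorphism group is transitive on flags. -/
def IsRegularManiplex {n : ℕ} {F : Type*} (r : Fin n → Equiv.Perm F) : Prop :=
  ∀ u v : F, ∃ φ : Equiv.Perm F, IsManiplexAuto r φ ∧ φ u = v

/-- A face `H`, an orbit of the subgroup generated by `{r j : j ∈ J}`, is bipartite. -/
def FaceBipartite {n : ℕ} {F : Type*} (r : Fin n → Equiv.Perm F) (J : Set (Fin n))
    (H : Set F) : Prop :=
  ∃ f : F → ZMod 2, ∀ j ∈ J, ∀ x ∈ H, f (r j x) = f x + 1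

/-- The number of `i`-faces of a maniplex. -/
noncomputable def NumFaces {n : ℕ} {F : Type*} (r : Fin n → Equiv.Perm F) (i : Fin n) : ℕ :=
  {O : Set F | ∃ u : F, O = MFace r i u}.ncard

/-- The canonical double cover of a maniplex. -/
def cdc {n : ℕ} {F : Type*} (r : Fin n → Equiv.Perm F) (i : Fin n) :
    Equiv.Perm (F × ZMod 2) :=
  Equiv.prodCongr (r i) (Equiv.addRight (1 : ZMod 2))

/-- The raviolo of a maniplex of rank `n`: a maniplex of rank `n+1` with two facets. -/
def raviolo {n : ℕ} {F : Type*} (r : Fin n → Equiv.Perm F) (i : Fin (n + 1)) :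
    Equiv.Perm (F × ZMod 2) :=
  if h : (i : ℕ) < n then Equiv.prodCongr (r ⟨i, h⟩) (Equiv.refl (ZMod 2))
  else Equiv.prodCongr (Equiv.refl F) (Equiv.addRight (1 : ZMod 2))

/-- A voltage assignment on a maniplex. -/
def IsVoltage {n : ℕ} {F : Type*} {G : Type*} [Group G] (r : Fin n → Equiv.Perm F)
    (ζ : F × Fin n → G) : Prop :=
  ∀ (u : F) (i : Fin n), ζ (r i u, i) = (ζ (u, i))⁻¹

/-- The permutations of the derived cover of a maniplex with voltage assignment `ζ`. -/
def mcov {n : ℕ} {F : Type*} {G : Type*} [Group G] (r : Fin n → Equiv.Perm F)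
    (ζ : F × Fin n → G) (i : Fin n) : Equiv.Perm (F × G) where
  toFun p := (r i p.1, ζ (p.1, i) * p.2)
  invFun p := ((r i).symm p.1, (ζ ((r i).symm p.1, i))⁻¹ * p.2)
  left_inv p := by simp
  right_inv p := by simp

theorem apply_mem_MOrbit {n : ℕ} {F : Type*} (r : Fin n → Equiv.Perm F) {J : Set (Fin n)}
    {i : Fin n} (hi : i ∈ J) (u : F) : r i u ∈ MOrbit r J u :=
  ⟨r i, Subgroup.subset_closure ⟨i, hi, rfl⟩, rfl⟩

theorem apply_mem_MFace_of_ne {n : ℕ} {F : Type*} (r : Fin n → Equiv.Perm F) {i j : Fin n}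
    (hij : i ≠ j) (u : F) : r j u ∈ MFace r i u :=
  apply_mem_MOrbit r (Set.mem_compl_singleton_iff.mpr hij.symm) u

theorem IsFaithful.eq_of_forall_mem_MFace {n : ℕ} {F : Type*} {r : Fin n → Equiv.Perm F}
    (hf : IsFaithful r) {u v : F} (hv : ∀ i, v ∈ MFace r i u) : v = u := by
  have hmem : v ∈ ⋂ i, MFace r i u := Set.mem_iInter.mpr hv
  rwa [hf u] at hmem

theorem stmt1_general {n : ℕ} {F : Type*} (r : Fin n → Equiv.Perm F)
    (hM : IsManiplex n r) (hf : IsFaithful r)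
    (j : Fin n) (u v : F) (hv : v ∈ MOrbit r {j}ᶜ u) : v ≠ r j u := by
  obtain ⟨-, -, hfixfree, -⟩ := hM
  rintro rfl
  have hface : ∀ i, r j u ∈ MFace r i u := fun i => by
    rcases eq_or_ne i j with rfl | hij
    · exact hv
    · exact apply_mem_MFace_of_ne r hij u
  exact hfixfree j u (hf.eq_of_forall_mem_MFace hface)

/-- In a faithful maniplex, two flags on the same `j`-face are not `j`-adjacent. -/
theorem stmt1 {n : ℕ} {F : Type*} [Fintype F] (r : Fin n → Equiv.Perm F)
    (hM : IsManiplex n r) (hf : IsFaithful r)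
    (j : Fin n) (u v : F) (hv : v ∈ MOrbit r {j}ᶜ u) : v ≠ r j u :=
  stmt1_general r hM hf j u v hv
end

section
/- Let M = (F, r) be a faithful and thin maniplex of rank 3. Then for any two flags u and v, letting J = {j ∈ Fin 3 : F_j(u) = F_j(v)}, the flag v lies in the orbit of u under the subgroup generated by {r_k : k ∉ J}. (For a faithful maniplex this condition expresses the strong connectivity of its poset of faces; hence every faithful thin maniplex of rank 3 is polytopal.) -/
lemma MOrbit.mem_self {n : ℕ} {F : Type*} (r : Fin n → Equiv.Perm F) (J : Set (Fin n))
    (u : F) : u ∈ MOrbit r J u :=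
  ⟨1, Subgroup.one_mem _, rfl⟩

lemma MOrbit.mem_gen {n : ℕ} {F : Type*} (r : Fin n → Equiv.Perm F) {J : Set (Fin n)}
    {j : Fin n} (hj : j ∈ J) (u : F) : r j u ∈ MOrbit r J u :=
  ⟨r j, Subgroup.subset_closure ⟨j, hj, rfl⟩, rfl⟩

lemma MOrbit.mono {n : ℕ} {F : Type*} (r : Fin n → Equiv.Perm F) {J J' : Set (Fin n)}
    (h : J ⊆ J') (u : F) : MOrbit r J u ⊆ MOrbit r J' u := by
  rintro v ⟨g, hg, rfl⟩
  exact ⟨g, Subgroup.closure_mono (Set.image_mono (f := r) h) hg, rfl⟩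

lemma MOrbit.orbit_eq {n : ℕ} {F : Type*} (r : Fin n → Equiv.Perm F) {J : Set (Fin n)}
    {u v : F} (h : v ∈ MOrbit r J u) : MOrbit r J u = MOrbit r J v := by
  obtain ⟨g, hg, rfl⟩ := h
  ext w
  constructor
  · rintro ⟨h, hh, rfl⟩
    exact ⟨h * g⁻¹, mul_mem hh (inv_mem hg), by simp [Equiv.Perm.mul_apply]⟩
  · rintro ⟨h, hh, rfl⟩
    exact ⟨h * g, mul_mem hh hg, by simp [Equiv.Perm.mul_apply]⟩

lemma face_step {n : ℕ} {F : Type*} (r : Fin n → Equiv.Perm F) {j k : Fin n}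
    (hkj : k ≠ j) (u : F) : MFace r j (r k u) = MFace r j u :=
  (MOrbit.orbit_eq r (MOrbit.mem_gen r (by simpa using hkj) u)).symm

lemma faithful_eq {n : ℕ} {F : Type*} {r : Fin n → Equiv.Perm F} (hf : IsFaithful r)
    {u v : F} (h : ∀ j, MFace r j u = MFace r j v) : v = u := by
  have hv : v ∈ ⋂ i : Fin n, MFace r i u := by
    refine Set.mem_iInter.2 fun i => ?_
    rw [h i]; exact MOrbit.mem_self r _ v
  rw [hf u] at hv
  exact hv

lemma face_ne {n : ℕ} {F : Type*} (r : Fin n → Equiv.Perm F)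
    (hinv : ∀ (i : Fin n) (u : F), r i u ≠ u) (hf : IsFaithful r) (k : Fin n) (u : F) :
    MFace r k u ≠ MFace r k (r k u) := by
  intro h
  refine hinv k u (faithful_eq hf fun j => ?_)
  by_cases hj : j = k
  · subst hj; exact h
  · exact (face_step r (Ne.symm (by exact hj)) u).symm

lemma thin_core {n : ℕ} {F : Type*} (r : Fin n → Equiv.Perm F)
    (hinv : ∀ (i : Fin n) (u : F), r i u ≠ u)
    (hf : IsFaithful r) (ht : IsThin r) (k : Fin n) (Fm Fp : Set F)
    (hFm : IsRankFace r ((k : ℤ) - 1) Fm) (hFp : IsRankFace r ((k : ℤ) + 1) Fp)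
    (u v : F) (hu : u ∈ Fm ∩ Fp) (hru : r k u ∈ Fm ∩ Fp) (hv : v ∈ Fm ∩ Fp)
    (hfaces : ∀ j, j ≠ k → MFace r j u = MFace r j v) : v = u ∨ v = r k u := by
  obtain ⟨O₁, O₂, hO, hset⟩ := ht k Fm Fp hFm hFp ⟨u, hu⟩
  have hA : MFace r k u ∈ ({O₁, O₂} : Set (Set F)) := by
    rw [← hset]; exact ⟨⟨u, rfl⟩, u, MOrbit.mem_self r _ u, hu⟩
  have hB : MFace r k (r k u) ∈ ({O₁, O₂} : Set (Set F)) := by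
    rw [← hset]; exact ⟨⟨r k u, rfl⟩, r k u, MOrbit.mem_self r _ _, hru⟩
  have hC : MFace r k v ∈ ({O₁, O₂} : Set (Set F)) := by
    rw [← hset]; exact ⟨⟨v, rfl⟩, v, MOrbit.mem_self r _ v, hv⟩
  have hne := face_ne r hinv hf k u
  simp only [Set.mem_insert_iff, Set.mem_singleton_iff] at hA hB hC
  have hCase : MFace r k v = MFace r k u ∨ MFace r k v = MFace r k (r k u) := by
    rcases hA with hA | hA <;> rcases hB with hB | hB <;> rcases hC with hC | hC <;>
      first
        | exact absurd (hA.trans hB.symm) hne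
        | exact Or.inl (hC.trans hA.symm)
        | exact Or.inr (hC.trans hB.symm)
  rcases hCase with h | h
  · left
    refine faithful_eq hf fun j => ?_
    by_cases hj : j = k
    · subst hj; exact h.symm
    · exact hfaces j hj
  · right
    refine faithful_eq hf fun j => ?_
    by_cases hj : j = k
    · subst hj; exact h.symm
    · exact (face_step r (Ne.symm hj) u).trans (hfaces j hj)

/-- Every faithful thin maniplex of rank `3` is polytopal: the poset of faces is
strongly connected. -/
theorem stmt2 {F : Type*} [Fintype F] (r : Fin 3 → Equiv.Perm F)
    (hM : IsManiplex 3 r) (hf : IsFaithful r) (ht : IsThin r) (u v : F) :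
    v ∈ MOrbit r {k : Fin 3 | k ∉ {j : Fin 3 | MFace r j u = MFace r j v}} u := by
  obtain ⟨-, hinvol, hfpf, htrans, -⟩ := hM
  by_cases h0 : MFace r 0 u = MFace r 0 v <;>
    by_cases h1 : MFace r 1 u = MFace r 1 v <;>
      by_cases h2 : MFace r 2 u = MFace r 2 v
  -- TTT
  · obtain rfl : v = u := faithful_eq hf (fun j => by fin_cases j <;> assumption)
    exact MOrbit.mem_self r _ _
  -- TTF : k = 2
  · have hJ : {j : Fin 3 | (j : ℤ) ≠ ((2 : Fin 3) : ℤ) - 1} = ({1} : Set (Fin 3))ᶜ := by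
      ext j; fin_cases j <;> decide
    have hFm : IsRankFace r (((2 : Fin 3) : ℤ) - 1) (MFace r 1 u) := by
      left
      refine ⟨⟨1, by decide⟩, u, ?_⟩
      rw [hJ]; rfl
    have hFp : IsRankFace r (((2 : Fin 3) : ℤ) + 1) (Set.univ : Set F) :=
      Or.inr ⟨by decide, rfl⟩
    have hres := thin_core r hfpf hf ht 2 (MFace r 1 u) Set.univ hFm hFp u v
      ⟨MOrbit.mem_self r _ u, trivial⟩
      ⟨MOrbit.mem_gen r (show (2 : Fin 3) ∈ ({1} : Set (Fin 3))ᶜ by decide) u, trivial⟩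
      ⟨by rw [h1]; exact MOrbit.mem_self r _ v, trivial⟩
      (by intro j hj; fin_cases j
          · exact h0
          · exact h1
          · exact absurd rfl hj)
    rcases hres with rfl | rfl
    · exact MOrbit.mem_self r _ _
    · exact MOrbit.mem_gen r h2 _
  -- TFT : k = 1
  · have hJm : {j : Fin 3 | (j : ℤ) ≠ ((1 : Fin 3) : ℤ) - 1} = ({0} : Set (Fin 3))ᶜ := by
      ext j; fin_cases j <;> decide
    have hJp : {j : Fin 3 | (j : ℤ) ≠ ((1 : Fin 3) : ℤ) + 1} = ({2} : Set (Fin 3))ᶜ := by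
      ext j; fin_cases j <;> decide
    have hFm : IsRankFace r (((1 : Fin 3) : ℤ) - 1) (MFace r 0 u) := by
      left
      refine ⟨⟨0, by decide⟩, u, ?_⟩
      rw [hJm]; rfl
    have hFp : IsRankFace r (((1 : Fin 3) : ℤ) + 1) (MFace r 2 u) := by
      left
      refine ⟨⟨2, by decide⟩, u, ?_⟩
      rw [hJp]; rfl
    have hres := thin_core r hfpf hf ht 1 (MFace r 0 u) (MFace r 2 u) hFm hFp u v
      ⟨MOrbit.mem_self r _ u, MOrbit.mem_self r _ u⟩
      ⟨MOrbit.mem_gen r (show (1 : Fin 3) ∈ ({0} : Set (Fin 3))ᶜ by decide) u,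
       MOrbit.mem_gen r (show (1 : Fin 3) ∈ ({2} : Set (Fin 3))ᶜ by decide) u⟩
      ⟨by rw [h0]; exact MOrbit.mem_self r _ v, by rw [h2]; exact MOrbit.mem_self r _ v⟩
      (by intro j hj; fin_cases j
          · exact h0
          · exact absurd rfl hj
          · exact h2)
    rcases hres with rfl | rfl
    · exact MOrbit.mem_self r _ _
    · exact MOrbit.mem_gen r h1 _
  -- TFF : only 0 equal
  · refine MOrbit.mono r (J := ({0} : Set (Fin 3))ᶜ) ?_ u ?_
    · intro k hk
      fin_cases k
      · simp at hk
      · exact h1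
      · exact h2
    · show v ∈ MFace r 0 u
      rw [h0]; exact MOrbit.mem_self r _ v
  -- FTT : k = 0
  · have hJp : {j : Fin 3 | (j : ℤ) ≠ ((0 : Fin 3) : ℤ) + 1} = ({1} : Set (Fin 3))ᶜ := by
      ext j; fin_cases j <;> decide
    have hFm : IsRankFace r (((0 : Fin 3) : ℤ) - 1) (Set.univ : Set F) :=
      Or.inr ⟨by decide, rfl⟩
    have hFp : IsRankFace r (((0 : Fin 3) : ℤ) + 1) (MFace r 1 u) := by
      left
      refine ⟨⟨1, by decide⟩, u, ?_⟩
      rw [hJp]; rfl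
    have hres := thin_core r hfpf hf ht 0 Set.univ (MFace r 1 u) hFm hFp u v
      ⟨trivial, MOrbit.mem_self r _ u⟩
      ⟨trivial, MOrbit.mem_gen r (show (0 : Fin 3) ∈ ({1} : Set (Fin 3))ᶜ by decide) u⟩
      ⟨trivial, by rw [h1]; exact MOrbit.mem_self r _ v⟩
      (by intro j hj; fin_cases j
          · exact absurd rfl hj
          · exact h1
          · exact h2)
    rcases hres with rfl | rfl
    · exact MOrbit.mem_self r _ _
    · exact MOrbit.mem_gen r h0 _
  -- FTF : only 1 equal
  · refine MOrbit.mono r (J := ({1} : Set (Fin 3))ᶜ) ?_ u ?_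
    · intro k hk
      fin_cases k
      · exact h0
      · simp at hk
      · exact h2
    · show v ∈ MFace r 1 u
      rw [h1]; exact MOrbit.mem_self r _ v
  -- FFT : only 2 equal
  · refine MOrbit.mono r (J := ({2} : Set (Fin 3))ᶜ) ?_ u ?_
    · intro k hk
      fin_cases k
      · exact h0
      · exact h1
      · simp at hk
    · show v ∈ MFace r 2 u
      rw [h2]; exact MOrbit.mem_self r _ v
  -- FFF
  · refine MOrbit.mono r ?_ u (htrans u v)
    intro k _
    fin_cases k
    · exact h0
    · exact h1
    · exact h2
end

section
/- In a faithful maniplex of rank 4, every 1-face and every 2-face is bipartite. -/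
section Words

variable {G : Type*} [Group G]

theorem Subgroup.exists_list_of_mem_closure_of_inv_mem {S : Set G} (hS : ∀ s ∈ S, s⁻¹ ∈ S)
    {g : G} (hg : g ∈ Subgroup.closure S) : ∃ L : List G, (∀ x ∈ L, x ∈ S) ∧ L.prod = g := by
  induction hg using Subgroup.closure_induction_left with
  | one => exact ⟨[], by simp, rfl⟩
  | mul_left x hx y _ ih =>
    obtain ⟨L, hL, rfl⟩ := ih
    exact ⟨x :: L, by simpa [hx] using hL, rfl⟩
  | inv_mul_cancel x hx y _ ih =>
    obtain ⟨L, hL, rfl⟩ := ih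
    exact ⟨x⁻¹ :: L, by simpa [hS x hx] using hL, rfl⟩

variable {X : Type*} [MulAction G X]

theorem exists_parity_of_even_length {S : Set G} (hS : ∀ s ∈ S, s⁻¹ ∈ S) {u : X}
    (heven : ∀ L : List G, (∀ g ∈ L, g ∈ S) → L.prod • u = u → Even L.length) :
    ∃ f : X → ZMod 2, ∀ s ∈ S, ∀ x, (∃ g ∈ Subgroup.closure S, x = g • u) →
      f (s • x) = f x + 1 := by
  classical
  have parity_eq : ∀ L L' : List G, (∀ g ∈ L, g ∈ S) → (∀ g ∈ L', g ∈ S) →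
      L.prod • u = L'.prod • u → (L.length : ZMod 2) = L'.length := by
    intro L L' hL hL' h
    have hword : ∀ g ∈ (L.map (·⁻¹)).reverse ++ L', g ∈ S := by
      simp only [List.mem_append, List.mem_reverse, List.mem_map]
      rintro g (⟨x, hx, rfl⟩ | hg)
      exacts [hS x (hL x hx), hL' g hg]
    have := heven _ hword (by
      rw [List.prod_append, ← List.prod_inv_reverse, mul_smul, ← h, inv_smul_smul])
    rw [← ZMod.natCast_eq_zero_iff_even] at this
    simpa [CharTwo.add_eq_zero] using this
  refine ⟨fun x => if h : ∃ L : List G, (∀ g ∈ L, g ∈ S) ∧ L.prod • u = x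
    then (h.choose.length : ZMod 2) else 0, ?_⟩
  rintro s hs _ ⟨g, hg, rfl⟩
  obtain ⟨L, hL, rfl⟩ := Subgroup.exists_list_of_mem_closure_of_inv_mem hS hg
  have hx : ∃ M : List G, (∀ g ∈ M, g ∈ S) ∧ M.prod • u = L.prod • u := ⟨L, hL, rfl⟩
  have hsx : ∃ M : List G, (∀ g ∈ M, g ∈ S) ∧ M.prod • u = s • L.prod • u :=
    ⟨s :: L, by simpa [hs] using hL, by rw [List.prod_cons, mul_smul]⟩
  dsimp only
  rw [dif_pos hx, dif_pos hsx,
    parity_eq _ (s :: L) hsx.choose_spec.1 (by simpa [hs] using hL)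
      (by rw [hsx.choose_spec.2, List.prod_cons, mul_smul]),
    parity_eq _ L hx.choose_spec.1 hL hx.choose_spec.2]
  simp

end Words

section Dihedral

variable {G : Type*} [Group G] {s t : G}

theorem semiconjBy_mul_inv_of_mul_self (hs : s * s = 1) (ht : t * t = 1) {a : G}
    (ha : a = s ∨ a = t) : SemiconjBy a (s * t) (s * t)⁻¹ := by
  have hs' : s⁻¹ = s := inv_eq_of_mul_eq_one_right hs
  have ht' : t⁻¹ = t := inv_eq_of_mul_eq_one_right ht
  rcases ha with rfl | rfl
  · rw [SemiconjBy, mul_inv_rev, hs', ht', ← mul_assoc, hs, one_mul, mul_assoc, hs, mul_one]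
  · rw [SemiconjBy, mul_inv_rev, hs', ht', mul_assoc]

theorem exists_prod_eq_zpow_mul_pow_length (hs : s * s = 1) (ht : t * t = 1) (L : List G)
    (hL : ∀ g ∈ L, g = s ∨ g = t) : ∃ k : ℤ, L.prod = (s * t) ^ k * s ^ L.length := by
  induction L with
  | nil => exact ⟨0, by simp⟩
  | cons a L ih =>
    obtain ⟨k, hk⟩ := ih fun g hg => hL g (List.mem_cons_of_mem a hg)
    have ha := hL a List.mem_cons_self
    rw [List.prod_cons, hk, ← mul_assoc,
      ((semiconjBy_mul_inv_of_mul_self hs ht ha).zpow_right k).eq, inv_zpow', mul_assoc,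
      List.length_cons, pow_succ']
    rcases ha with rfl | rfl
    · exact ⟨-k, rfl⟩
    · refine ⟨-k - 1, ?_⟩
      have : a = (s * a)⁻¹ * s := by
        rw [mul_inv_rev, inv_eq_of_mul_eq_one_right ht, mul_assoc,
          inv_eq_of_mul_eq_one_right hs, hs, mul_one]
      rw [zpow_sub_one, mul_assoc, ← mul_assoc (s * a)⁻¹, ← this]

theorem isConj_prod_of_odd_length (hs : s * s = 1) (ht : t * t = 1) (L : List G)
    (hL : ∀ g ∈ L, g = s ∨ g = t) (hodd : Odd L.length) : IsConj s L.prod ∨ IsConj t L.prod := by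
  obtain ⟨k, hk⟩ := exists_prod_eq_zpow_mul_pow_length hs ht L hL
  obtain ⟨n, hn⟩ := hodd
  rw [hk, hn, pow_succ, pow_mul, sq, hs, one_pow, one_mul]
  have hss := semiconjBy_mul_inv_of_mul_self hs ht (Or.inl rfl)
  -- conjugating by the rotation `(s * t) ^ m` shifts the exponent by `2 * m`
  have hshift : ∀ m e : ℤ, IsConj ((s * t) ^ e * s) ((s * t) ^ (2 * m + e) * s) := fun m e =>
    isConj_iff.2 ⟨(s * t) ^ m, by
      rw [mul_assoc, mul_assoc, ← zpow_neg, (hss.zpow_right (-m)).eq, inv_zpow', neg_neg,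
        ← mul_assoc, ← mul_assoc, ← zpow_add, ← zpow_add, add_comm m e, add_assoc, ← two_mul,
        add_comm]⟩
  obtain ⟨m, rfl | rfl⟩ := Int.even_or_odd' k
  · left
    simpa using hshift m 0
  · right
    refine IsConj.trans (isConj_iff.2 ⟨s, ?_⟩) (hshift m 1)
    rw [inv_eq_of_mul_eq_one_right hs, zpow_one, mul_assoc]

variable {X : Type*} [MulAction G X]

theorem IsConj.smul_ne_self {a b : G} (h : IsConj a b) (ha : ∀ y : X, a • y ≠ y) (y : X) :
    b • y ≠ y := by
  obtain ⟨c, rfl⟩ := isConj_iff.1 h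
  intro hy
  apply ha (c⁻¹ • y)
  conv_rhs => rw [← hy]
  simp [mul_smul]

end Dihedral

section CentralInvolution

variable {G : Type*} [Group G] {c s t : G}

theorem exists_prod_eq_pow_mul_prod (hcs : Commute c s) (hct : Commute c t) (L : List G)
    (hL : ∀ g ∈ L, g = c ∨ g = s ∨ g = t) :
    ∃ (a : ℕ) (M : List G), (∀ g ∈ M, g = s ∨ g = t) ∧ a + M.length = L.length ∧
      L.prod = c ^ a * M.prod := by
  induction L with
  | nil => exact ⟨0, [], by simp, rfl, by simp⟩
  | cons g L ih =>
    obtain ⟨a, M, hM, hlen, hprod⟩ := ih fun g hg => hL g (List.mem_cons_of_mem _ hg)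
    rcases hL g List.mem_cons_self with rfl | hg
    · exact ⟨a + 1, M, hM, by simp [← hlen]; omega, by
        rw [List.prod_cons, hprod, ← mul_assoc, ← pow_succ']⟩
    · refine ⟨a, g :: M, ?_, by simp [← hlen]; omega, ?_⟩
      · simpa [hg] using hM
      · have hcomm : Commute g (c ^ a) := by
          rcases hg with rfl | rfl
          exacts [hcs.symm.pow_right a, hct.symm.pow_right a]
        rw [List.prod_cons, List.prod_cons, hprod, ← mul_assoc, hcomm.eq, mul_assoc]

variable {X : Type*} [MulAction G X]

theorem prod_smul_ne_self_of_odd_length (hs : s * s = 1) (ht : t * t = 1)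
    (hfs : ∀ y : X, s • y ≠ y) (hft : ∀ y : X, t • y ≠ y) (L : List G)
    (hL : ∀ g ∈ L, g = s ∨ g = t) (hodd : Odd L.length) (y : X) : L.prod • y ≠ y :=
  (isConj_prod_of_odd_length hs ht L hL hodd).elim (·.smul_ne_self hfs y) (·.smul_ne_self hft y)

theorem even_length_of_prod_smul_eq_self (hc : c * c = 1) (hs : s * s = 1) (ht : t * t = 1)
    (hcs : Commute c s) (hct : Commute c t) (hfs : ∀ y : X, s • y ≠ y)
    (hft : ∀ y : X, t • y ≠ y) {x : X}
    (hcx : ∀ M : List G, (∀ g ∈ M, g = s ∨ g = t) → M.prod • x ≠ c • x) (L : List G)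
    (hL : ∀ g ∈ L, g ∈ ({c, s, t} : Set G)) (hfix : L.prod • x = x) : Even L.length := by
  obtain ⟨a, M, hM, hlen, hprod⟩ := exists_prod_eq_pow_mul_prod hcs hct L hL
  rw [hprod, mul_smul] at hfix
  rcases Nat.even_or_odd a with ⟨m, rfl⟩ | ⟨m, rfl⟩
  · rw [← two_mul, pow_mul, sq, hc, one_pow, one_smul] at hfix
    have hM_even : Even M.length := Nat.not_odd_iff_even.1 fun hodd =>
      prod_smul_ne_self_of_odd_length hs ht hfs hft M hM hodd x hfix
    rw [← hlen]
    exact Even.add ⟨m, rfl⟩ hM_even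
  · rw [pow_succ, pow_mul, sq, hc, one_pow, one_mul] at hfix
    refine absurd ?_ (hcx M hM)
    conv_rhs => rw [← hfix, smul_smul, hc, one_smul]

end CentralInvolution

section Maniplex

variable {n : ℕ} {F : Type*} {r : Fin n → Equiv.Perm F}

theorem IsManiplex.mul_self (hM : IsManiplex n r) (i : Fin n) : r i * r i = 1 :=
  Equiv.ext (hM.2.1 i)

theorem IsManiplex.commute (hM : IsManiplex n r) {i j : Fin n} (hij : 1 < |(i : ℤ) - j|) :
    Commute (r i) (r j) := by
  have h : (r i * r j) * (r i * r j) = 1 := Equiv.ext ((hM.2.2.2.2 i j hij).1)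
  calc r i * r j = (r i * r j)⁻¹ := (inv_eq_of_mul_eq_one_right h).symm
    _ = r j * r i := by
      rw [mul_inv_rev, inv_eq_of_mul_eq_one_right (hM.mul_self i),
        inv_eq_of_mul_eq_one_right (hM.mul_self j)]

theorem IsFaithful.apply_ne_of_mem_closure (hf : IsFaithful r) {c : Fin n} {x : F}
    (hx : r c x ≠ x) {g : Equiv.Perm F} (hg : g ∈ Subgroup.closure (r '' {c}ᶜ)) :
    g x ≠ r c x := by
  intro hgx
  refine hx ((Set.ext_iff.1 (hf x) (r c x)).1 (Set.mem_iInter.2 fun m => ?_))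
  by_cases hm : m = c
  · subst hm
    exact ⟨g, hg, hgx.symm⟩
  · exact ⟨r c, Subgroup.subset_closure ⟨c, Ne.symm hm, rfl⟩, rfl⟩

theorem IsManiplex.faceBipartite_of_commute (hM : IsManiplex n r) (hf : IsFaithful r)
    {c s t : Fin n} (hcs : 1 < |(c : ℤ) - s|) (hct : 1 < |(c : ℤ) - t|) (u : F) :
    FaceBipartite r {c, s, t} (MOrbit r {c, s, t} u) := by
  have hne : ∀ j : Fin n, 1 < |(c : ℤ) - j| → j ≠ c := by
    rintro j h rfl
    simp at h
  have himage : r '' {c, s, t} = {r c, r s, r t} := by simp [Set.image_insert_eq]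
  have hinv : ∀ g ∈ ({r c, r s, r t} : Set (Equiv.Perm F)), g⁻¹ ∈ ({r c, r s, r t} : Set _) := by
    rintro _ (rfl | rfl | rfl) <;> simp [inv_eq_of_mul_eq_one_right (hM.mul_self _)]
  have hcu : ∀ M : List (Equiv.Perm F), (∀ g ∈ M, g = r s ∨ g = r t) → M.prod • u ≠ r c • u :=
    fun M hMst => hf.apply_ne_of_mem_closure (hM.2.2.1 c u) <|
      Subgroup.list_prod_mem _ fun g hg => Subgroup.subset_closure <| by
        rcases hMst g hg with rfl | rfl
        exacts [⟨s, hne s hcs, rfl⟩, ⟨t, hne t hct, rfl⟩]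
  obtain ⟨f, hfpar⟩ := exists_parity_of_even_length hinv (u := u)
    (even_length_of_prod_smul_eq_self (hM.mul_self c) (hM.mul_self s) (hM.mul_self t)
      (hM.commute hcs) (hM.commute hct) (hM.2.2.1 s) (hM.2.2.1 t) hcu)
  refine ⟨f, fun j hj x hx => ?_⟩
  obtain ⟨g, hg, rfl⟩ := hx
  rw [himage] at hg
  exact hfpar (r j) (himage ▸ ⟨j, hj, rfl⟩) _ ⟨g, hg, rfl⟩

end Maniplex

theorem stmt3_general {F : Type*} (r : Fin 4 → Equiv.Perm F)
    (hM : IsManiplex 4 r) (hf : IsFaithful r)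
    (i : Fin 4) (hi : i = 1 ∨ i = 2) (u : F) :
    FaceBipartite r {i}ᶜ (MFace r i u) := by
  rcases hi with rfl | rfl
  · have h : ({1}ᶜ : Set (Fin 4)) = {0, 2, 3} := by ext j; fin_cases j <;> simp
    rw [MFace, h]
    exact hM.faceBipartite_of_commute hf (by decide) (by decide) u
  · have h : ({2}ᶜ : Set (Fin 4)) = {3, 0, 1} := by ext j; fin_cases j <;> simp
    rw [MFace, h]
    exact hM.faceBipartite_of_commute hf (by decide) (by decide) u

/-- In a faithful maniplex of rank `4`, every `1`-face and every `2`-face is bipartite. -/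
theorem stmt3 {F : Type*} [Fintype F] (r : Fin 4 → Equiv.Perm F)
    (hM : IsManiplex 4 r) (hf : IsFaithful r)
    (i : Fin 4) (hi : i = 1 ∨ i = 2) (u : F) :
    FaceBipartite r {i}ᶜ (MFace r i u) :=
  stmt3_general r hM hf i hi u
end

section
/- Let Γ be a connected simple graph on a finite vertex set V, let G be a group, and let ζ be a voltage assignment on Γ with values in G. Suppose there is a spanning tree T of Γ such that ζ(d) = 1 for every dart d of Γ whose underlying edge lies in T (ζ is T-reduced). Then the derived cover Cov(Γ, ζ) is connected if and only if the image of ζ generates G, i.e., Subgroup.closure (Set.range ζ) = ⊤. -/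
/-- The derived cover of a voltage graph `(Γ, ζ)`. -/
def GCov {V : Type*} (Γ : SimpleGraph V) {G : Type*} [Group G] (ζ : Γ.Dart → G)
    (hζ : ∀ d : Γ.Dart, ζ d.symm = (ζ d)⁻¹) : SimpleGraph (V × G) where
  Adj p q := ∃ d : Γ.Dart, d.fst = p.1 ∧ d.snd = q.1 ∧ q.2 = ζ d * p.2
  symm := by
    refine ⟨?_⟩
    rintro p q ⟨d, h1, h2, h3⟩
    refine ⟨d.symm, h2, h1, ?_⟩
    rw [hζ, h3, inv_mul_cancel_left]
  loopless := by
    refine ⟨?_⟩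
    rintro p ⟨d, h1, h2, h3⟩
    have := d.adj
    rw [h1, h2] at this
    exact Γ.loopless.irrefl p.1 this

/-- The canonical double cover of a simple graph. -/
def CanonicalDoubleCover {V : Type*} (Γ : SimpleGraph V) : SimpleGraph (V × ZMod 2) where
  Adj p q := Γ.Adj p.1 q.1 ∧ q.2 = p.2 + 1
  symm := by
    refine ⟨?_⟩
    rintro p q ⟨h1, h2⟩
    refine ⟨h1.symm, ?_⟩
    have h : (1 : ZMod 2) + 1 = 0 := by decide
    rw [h2, add_assoc, h, add_zero]
  loopless := by
    refine ⟨?_⟩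
    rintro p ⟨h1, _⟩
    exact Γ.loopless.irrefl p.1 h1

section Aux

variable {V : Type*} {G : Type*} [Group G] {Γ : SimpleGraph V} {ζ : Γ.Dart → G}
  {hζ : ∀ d : Γ.Dart, ζ d.symm = (ζ d)⁻¹}

/-- Right translation by `h` is a graph homomorphism of the derived cover. -/
def gcovTransHom (Γ : SimpleGraph V) (ζ : Γ.Dart → G) (hζ : ∀ d : Γ.Dart, ζ d.symm = (ζ d)⁻¹)
    (h : G) : GCov Γ ζ hζ →g GCov Γ ζ hζ where
  toFun p := (p.1, p.2 * h)
  map_rel' := by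
    rintro p q ⟨d, h1, h2, h3⟩
    exact ⟨d, h1, h2, by dsimp only; rw [h3, mul_assoc]⟩

lemma gcov_trans_reachable {p q : V × G}
    (r : (GCov Γ ζ hζ).Reachable p q) (h : G) :
    (GCov Γ ζ hζ).Reachable (p.1, p.2 * h) (q.1, q.2 * h) :=
  r.map (gcovTransHom Γ ζ hζ h)

end Aux

/-- If the voltage assignment is `T`-reduced for a spanning tree `T`, then the derived cover
is connected iff the voltages generate the voltage group. -/
theorem stmt4 {V : Type*} [Fintype V] {G : Type*} [Group G]
    (Γ : SimpleGraph V) (hΓ : Γ.Connected)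
    (ζ : Γ.Dart → G) (hζ : ∀ d : Γ.Dart, ζ d.symm = (ζ d)⁻¹)
    (T : SimpleGraph V) (hTsub : T ≤ Γ) (hTree : T.IsTree)
    (hred : ∀ d : Γ.Dart, T.Adj d.fst d.snd → ζ d = 1) :
    (GCov Γ ζ hζ).Connected ↔ Subgroup.closure (Set.range ζ) = ⊤ := by
    classical
  obtain ⟨v₀⟩ := hΓ.nonempty
  -- lifting walks in the spanning tree keeps the group coordinate
  have treeLift : ∀ (g : G) {u v : V}, T.Walk u v → (GCov Γ ζ hζ).Walk (u, g) (v, g) := by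
    intro g u v w
    induction w with
    | nil => exact .nil
    | @cons a b c hadj _ ih =>
      refine .cons ?_ ih
      have hΓadj : Γ.Adj a b := hTsub hadj
      refine ⟨⟨(a, b), hΓadj⟩, rfl, rfl, ?_⟩
      rw [hred ⟨(a, b), hΓadj⟩ hadj, one_mul]
  have same : ∀ (g : G) (u v : V), (GCov Γ ζ hζ).Reachable (u, g) (v, g) := by
    intro g u v
    exact (hTree.isConnected.preconnected u v).elim fun w => ⟨treeLift g w⟩
  -- forward: walks give closure membership
  have fwd : ∀ {p q : V × G}, (GCov Γ ζ hζ).Walk p q →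
      q.2 * p.2⁻¹ ∈ Subgroup.closure (Set.range ζ) := by
    intro p q w
    induction w with
    | nil => simpa using Subgroup.one_mem _
    | @cons p r q hadj _ ih =>
      obtain ⟨d, _, _, h3⟩ := hadj
      have hd : (ζ d : G) ∈ Subgroup.closure (Set.range ζ) :=
        Subgroup.subset_closure ⟨d, rfl⟩
      have : q.2 * p.2⁻¹ = (q.2 * r.2⁻¹) * ζ d := by
        rw [h3]; group
      rw [this]
      exact mul_mem ih hd
  -- backward: closure membership gives reachability at the basepoint
  have rev : ∀ g ∈ Subgroup.closure (Set.range ζ),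
      (GCov Γ ζ hζ).Reachable (v₀, (1 : G)) (v₀, g) := by
    intro g hg
    induction hg using Subgroup.closure_induction with
    | mem x hx =>
      obtain ⟨d, rfl⟩ := hx
      have h1 : (GCov Γ ζ hζ).Reachable (v₀, (1 : G)) (d.fst, (1 : G)) := same 1 v₀ d.fst
      have h2 : (GCov Γ ζ hζ).Adj (d.fst, (1 : G)) (d.snd, ζ d) :=
        ⟨d, rfl, rfl, (mul_one _).symm⟩
      exact (h1.trans h2.reachable).trans (same (ζ d) d.snd v₀)
    | one => exact SimpleGraph.Reachable.refl _
    | mul x y hx hy ihx ihy =>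
      have := gcov_trans_reachable ihx y
      simp only [one_mul] at this
      exact ihy.trans this
    | inv x hx ihx =>
      have := gcov_trans_reachable ihx x⁻¹
      simp only [one_mul, mul_inv_cancel] at this
      exact this.symm
  constructor
  · intro hconn
    rw [eq_top_iff]
    intro g _
    obtain ⟨w⟩ := hconn ((v₀, (1 : G))) ((v₀, g))
    simpa using fwd w
  · intro htop
    have hne : Nonempty (V × G) := ⟨(v₀, 1)⟩
    rw [SimpleGraph.connected_iff]
    refine ⟨fun p q => ?_, hne⟩
    have hp : (GCov Γ ζ hζ).Reachable p (v₀, (1 : G)) :=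
      (same p.2 p.1 v₀).trans (rev p.2 (htop ▸ Subgroup.mem_top p.2)).symm
    have hq : (GCov Γ ζ hζ).Reachable q (v₀, (1 : G)) :=
      (same q.2 q.1 v₀).trans (rev q.2 (htop ▸ Subgroup.mem_top q.2)).symm
    exact hp.trans hq.symm
end

section
/- Let M = (F, r) be a maniplex of rank n, let G be a group and let ζ be a voltage assignment on M. Then the derived cover Cov(M, ζ) is a maniplex of rank n if and only if (a) the group generated by the permutations r̄_0, …, r̄_{n−1} acts transitively on F × G, and (b) for every flag u and all colours i, j with |i − j| > 1 one has ζ(r_j u, i)·ζ(u, j) = ζ(r_i u, j)·ζ(u, i) (i.e., every closed walk of length four in M with alternating colours i, j has trivial net voltage). -/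
/-! The permutation `mcov r ζ i` lies over `r i`, so being an involution without fixed points, and
`r̄ᵢ r̄ⱼ` having no fixed points, lift from the base maniplex. Over a flag `u`, the square
`(r̄ᵢ r̄ⱼ)²` multiplies the group coordinate by the net voltage
`(ζ (r i u, j) * ζ (u, i))⁻¹ * (ζ (r j u, i) * ζ (u, j))` of the alternating closed `4`-walk at
`u`, so it is the identity exactly when that walk has trivial voltage. -/

section Involution

variable {α : Type*} {a b : Equiv.Perm α}

theorem Equiv.Perm.apply_apply_apply_of_square_mul_eq_one (ha : ∀ u, a (a u) = u)
    (hab : ∀ u, a (b (a (b u))) = u) (u : α) : b (a (b u)) = a u := by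
  simpa only [ha] using congrArg a (hab u)

theorem Equiv.Perm.apply_comm_of_square_mul_eq_one (ha : ∀ u, a (a u) = u)
    (hb : ∀ u, b (b u) = u) (hab : ∀ u, a (b (a (b u))) = u) (u : α) : a (b u) = b (a u) := by
  simpa only [hb] using (apply_apply_apply_of_square_mul_eq_one ha hab (b u)).symm

end Involution

section DerivedCover

variable {n : ℕ} {F G : Type*} [Group G] {r : Fin n → Equiv.Perm F} {ζ : F × Fin n → G}

@[simp]
theorem mcov_apply (i : Fin n) (p : F × G) : mcov r ζ i p = (r i p.1, ζ (p.1, i) * p.2) := rfl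

theorem mcov_mcov_self (hζ : IsVoltage r ζ) {i : Fin n} (hi : ∀ u, r i (r i u) = u)
    (p : F × G) : mcov r ζ i (mcov r ζ i p) = p := by
  simp [hi, hζ _ _, ← mul_assoc]

theorem mcov_mul_mcov_sq_apply (hζ : IsVoltage r ζ) {i j : Fin n} (hi : ∀ u, r i (r i u) = u)
    (hj : ∀ u, r j (r j u) = u) (hij : ∀ u, r i (r j (r i (r j u))) = u) (u : F) (g : G) :
    mcov r ζ i (mcov r ζ j (mcov r ζ i (mcov r ζ j (u, g)))) =
      (u, (ζ (r i u, j) * ζ (u, i))⁻¹ * (ζ (r j u, i) * ζ (u, j)) * g) := by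
  simp only [mcov_apply]
  rw [hij, Equiv.Perm.apply_apply_apply_of_square_mul_eq_one hi hij,
    Equiv.Perm.apply_comm_of_square_mul_eq_one hi hj hij, hζ, hζ]
  congr 1
  group

end DerivedCover

theorem stmt5_general {n : ℕ} {F : Type*} {G : Type*} [Group G]
    (r : Fin n → Equiv.Perm F) (hM : IsManiplex n r)
    (ζ : F × Fin n → G) (hζ : IsVoltage r ζ) :
    IsManiplex n (mcov r ζ) ↔
      ((∀ p q : F × G, q ∈ MOrbit (mcov r ζ) Set.univ p) ∧
        ∀ (u : F) (i j : Fin n), 1 < |(i : ℤ) - (j : ℤ)| →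
          ζ (r j u, i) * ζ (u, j) = ζ (r i u, j) * ζ (u, i)) := by
  obtain ⟨hne, hinv, hfpf, -, hcomm⟩ := hM
  have hsquare {i j : Fin n} (hij : 1 < |(i : ℤ) - (j : ℤ)|) (u : F) (g : G) :=
    mcov_mul_mcov_sq_apply hζ (hinv i) (hinv j) (hcomm i j hij).1 u g
  constructor
  · rintro ⟨-, -, -, htrans, hcov⟩
    refine ⟨htrans, fun u i j hij => ?_⟩
    have h := congrArg Prod.snd ((hcov i j hij).1 (u, 1))
    rwa [hsquare hij, mul_one, inv_mul_eq_one, eq_comm] at h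
  · rintro ⟨htrans, hvolt⟩
    refine ⟨⟨(hne.some, 1)⟩, fun i => mcov_mcov_self hζ (hinv i),
      fun i p h => hfpf i p.1 (congrArg Prod.fst h), htrans, fun i j hij => ⟨?_, ?_⟩⟩
    · rintro ⟨u, g⟩
      rw [hsquare hij, hvolt u i j hij, inv_mul_cancel, one_mul]
    · exact fun p h => (hcomm i j hij).2 p.1 (congrArg Prod.fst h)

/-- The derived cover of a maniplex is a maniplex iff it is connected and every
closed `4`-walk of alternating non-consecutive colours has trivial net voltage. -/
theorem stmt5 {n : ℕ} {F : Type*} [Fintype F] {G : Type*} [Group G]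
    (r : Fin n → Equiv.Perm F) (hM : IsManiplex n r)
    (ζ : F × Fin n → G) (hζ : IsVoltage r ζ) :
    IsManiplex n (mcov r ζ) ↔
      ((∀ p q : F × G, q ∈ MOrbit (mcov r ζ) Set.univ p) ∧
        ∀ (u : F) (i j : Fin n), 1 < |(i : ℤ) - (j : ℤ)| →
          ζ (r j u, i) * ζ (u, j) = ζ (r i u, j) * ζ (u, i)) :=
  stmt5_general r hM ζ hζ
end

section
/- Let M = (F, r) be a faithful maniplex of rank 4 in which every 0-face and every 3-face is non-bipartite, and let M̄ = (F × ZMod 2, r̄) be its canonical double cover (which under these hypotheses is a maniplex of rank 4). If M is regular, then M̄ is regular. -/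
theorem IsManiplexAuto.prodCongr_addRight_cdc {n : ℕ} {F : Type*} {r : Fin n → Equiv.Perm F}
    {φ : Equiv.Perm F} (hφ : IsManiplexAuto r φ) (c : ZMod 2) :
    IsManiplexAuto (cdc r) (φ.prodCongr (Equiv.addRight c)) := by
  rintro i ⟨x, s⟩
  simp only [cdc, Equiv.prodCongr_apply, Equiv.coe_addRight, Prod.map, hφ i x, add_right_comm]

theorem IsRegularManiplex.cdc {n : ℕ} {F : Type*} {r : Fin n → Equiv.Perm F}
    (hreg : IsRegularManiplex r) : IsRegularManiplex (cdc r) := by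
  rintro ⟨u, a⟩ ⟨v, b⟩
  obtain ⟨φ, hφ, rfl⟩ := hreg u v
  exact ⟨_, hφ.prodCongr_addRight_cdc (b - a), by simp⟩

theorem stmt8_general {F : Type*} (r : Fin 4 → Equiv.Perm F)
    (hreg : IsRegularManiplex r) :
    IsRegularManiplex (cdc r) :=
  hreg.cdc

/-- The canonical double cover of a regular faithful `4`-maniplex with non-bipartite
`0`- and `3`-faces is regular. -/
theorem stmt8 {F : Type*} [Fintype F] (r : Fin 4 → Equiv.Perm F)
    (hM : IsManiplex 4 r) (hf : IsFaithful r)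
    (hnb : ∀ i : Fin 4, ((i : ℕ) = 0 ∨ (i : ℕ) = 3) →
      ∀ u : F, ¬ FaceBipartite r {i}ᶜ (MFace r i u))
    (hreg : IsRegularManiplex r) :
    IsRegularManiplex (cdc r) :=
  stmt8_general r hreg
end

section
/- Let M = (F, r) be a faithful maniplex of rank 4 in which every 0-face and every 3-face is non-bipartite, and let M̄ = (F × ZMod 2, r̄) be its canonical double cover (which under these hypotheses is a maniplex of rank 4). Then M̄ is faithful. -/
private lemma lemA {n : ℕ} {F : Type*} (r : Fin n → Equiv.Perm F) (J : Set (Fin n))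
    {σ : Equiv.Perm (F × ZMod 2)} (hσ : σ ∈ Subgroup.closure (cdc r '' J)) :
    ∃ h ∈ Subgroup.closure (r '' J), ∃ c : ZMod 2,
      ∀ p : F × ZMod 2, σ p = (h p.1, p.2 + c) := by
  have hcc : ∀ c : ZMod 2, c + c = 0 := by decide
  induction hσ using Subgroup.closure_induction with
  | mem x hx =>
    obtain ⟨j, hj, rfl⟩ := hx
    exact ⟨r j, Subgroup.subset_closure ⟨j, hj, rfl⟩, 1, fun p => rfl⟩
  | one => exact ⟨1, one_mem _, 0, fun p => by simp⟩
  | mul x y hx hy ihx ihy =>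
    obtain ⟨h, hh, c, hc⟩ := ihx
    obtain ⟨h', hh', c', hc'⟩ := ihy
    refine ⟨h * h', mul_mem hh hh', c + c', fun p => ?_⟩
    rw [Equiv.Perm.mul_apply, hc', hc]
    simp only [Prod.mk.injEq, Equiv.Perm.mul_apply]
    exact ⟨trivial, by ring⟩
  | inv x hx ih =>
    obtain ⟨h, hh, c, hc⟩ := ih
    refine ⟨h⁻¹, inv_mem hh, c, fun p => ?_⟩
    have hx2 : x (h⁻¹ p.1, p.2 + c) = p := by
      rw [hc]
      simp only [Equiv.Perm.coe_inv, Equiv.apply_symm_apply]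
      rw [add_assoc, hcc, add_zero]
    calc x⁻¹ p = x⁻¹ (x (h⁻¹ p.1, p.2 + c)) := by rw [hx2]
    _ = (h⁻¹ p.1, p.2 + c) := Equiv.symm_apply_apply x _

private lemma akey {G : Type*} [Group G] (a b : G) (ha : a * a = 1) (hb : b * b = 1)
    (m : ℤ) : a * (a * b) ^ m = (a * b) ^ (-m) * a := by
  have hainv : a⁻¹ = a := inv_eq_of_mul_eq_one_right ha
  have hbinv : b⁻¹ = b := inv_eq_of_mul_eq_one_right hb
  have h1 : (MulAut.conj a) (a * b) = (a * b)⁻¹ := by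
    rw [MulAut.conj_apply, hainv, mul_inv_rev, hainv, hbinv, ← mul_assoc a a b, ha, one_mul]
  have h2 : a * (a * b) ^ m * a⁻¹ = (a * b) ^ (-m) := by
    have h3 := map_zpow (MulAut.conj a) (a * b) m
    rw [h1, MulAut.conj_apply, inv_zpow, ← zpow_neg] at h3
    exact h3
  rw [← h2, inv_mul_cancel_right]

private lemma dihedral_decomp {G : Type*} [Group G] (a b : G) (ha : a * a = 1)
    (hb : b * b = 1) : ∀ σ ∈ Subgroup.closure ({a, b} : Set G),
    ∃ k : ℤ, σ = (a * b) ^ k ∨ σ = (a * b) ^ k * a := by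
  have hainv : a⁻¹ = a := inv_eq_of_mul_eq_one_right ha
  have hbinv : b⁻¹ = b := inv_eq_of_mul_eq_one_right hb
  intro σ hσ
  induction hσ using Subgroup.closure_induction with
  | mem x hx =>
    rcases hx with h1 | h1 <;> rw [h1]
    · exact ⟨0, Or.inr (by rw [zpow_zero, one_mul])⟩
    · refine ⟨-1, Or.inr ?_⟩
      rw [zpow_neg_one, mul_inv_rev, mul_assoc, inv_mul_cancel, mul_one, hbinv]
  | one => exact ⟨0, Or.inl (zpow_zero _).symm⟩
  | mul x y hx hy ihx ihy =>
    obtain ⟨k, hk⟩ := ihx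
    obtain ⟨l, hl⟩ := ihy
    rcases hk with rfl | rfl <;> rcases hl with rfl | rfl
    · exact ⟨k + l, Or.inl (zpow_add _ _ _).symm⟩
    · exact ⟨k + l, Or.inr (by rw [← mul_assoc, ← zpow_add])⟩
    · refine ⟨k - l, Or.inr ?_⟩
      rw [mul_assoc, akey a b ha hb l, ← mul_assoc, ← zpow_add, ← sub_eq_add_neg]
    · refine ⟨k - l, Or.inl ?_⟩
      rw [mul_assoc, ← mul_assoc a, akey a b ha hb l, mul_assoc ((a*b)^(-l)), ha, mul_one,
        ← zpow_add, ← sub_eq_add_neg]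
  | inv x hx ih =>
    obtain ⟨k, hk⟩ := ih
    rcases hk with rfl | rfl
    · exact ⟨-k, Or.inl (zpow_neg _ _).symm⟩
    · refine ⟨k, Or.inr ?_⟩
      rw [mul_inv_rev, hainv, ← zpow_neg, akey a b ha hb (-k), neg_neg]

private lemma central_decomp {G : Type*} [Group G] (c a b : G) (hc : c * c = 1)
    (hca : Commute c a) (hcb : Commute c b) :
    ∀ σ ∈ Subgroup.closure ({c, a, b} : Set G),
    ∃ τ ∈ Subgroup.closure ({a, b} : Set G), σ = τ ∨ σ = c * τ := by
  have hcinv : c⁻¹ = c := inv_eq_of_mul_eq_one_right hc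
  have hcent : ∀ τ ∈ Subgroup.closure ({a, b} : Set G), Commute c τ := by
    intro τ hτ
    induction hτ using Subgroup.closure_induction with
    | mem x hx => rcases hx with h1 | h1 <;> rw [h1]; exacts [hca, hcb]
    | one => exact Commute.one_right c
    | mul x y _ _ h1 h2 => exact h1.mul_right h2
    | inv x _ h1 => exact h1.inv_right
  intro σ hσ
  induction hσ using Subgroup.closure_induction with
  | mem x hx =>
    rcases hx with h1 | h1 | h1 <;> rw [h1]
    · exact ⟨1, one_mem _, Or.inr (mul_one _).symm⟩
    · exact ⟨a, Subgroup.subset_closure (Set.mem_insert _ _), Or.inl rfl⟩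
    · exact ⟨b, Subgroup.subset_closure (Set.mem_insert_of_mem _ rfl), Or.inl rfl⟩
  | one => exact ⟨1, one_mem _, Or.inl rfl⟩
  | mul x y hx hy ihx ihy =>
    obtain ⟨τ, hτ, hx'⟩ := ihx
    obtain ⟨τ', hτ', hy'⟩ := ihy
    rcases hx' with h1 | h1 <;> rcases hy' with h2 | h2 <;> rw [h1, h2]
    · exact ⟨τ * τ', mul_mem hτ hτ', Or.inl rfl⟩
    · refine ⟨τ * τ', mul_mem hτ hτ', Or.inr ?_⟩
      rw [← mul_assoc, ← (hcent τ hτ).eq, mul_assoc]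
    · exact ⟨τ * τ', mul_mem hτ hτ', Or.inr (mul_assoc _ _ _)⟩
    · refine ⟨τ * τ', mul_mem hτ hτ', Or.inl ?_⟩
      rw [mul_assoc, ← mul_assoc τ c τ', ← (hcent τ hτ).eq, ← mul_assoc, ← mul_assoc, hc,
        one_mul]
  | inv x hx ih =>
    obtain ⟨τ, hτ, h'⟩ := ih
    rcases h' with h1 | h1 <;> rw [h1]
    · exact ⟨τ⁻¹, inv_mem hτ, Or.inl rfl⟩
    · refine ⟨τ⁻¹, inv_mem hτ, Or.inr ?_⟩
      rw [mul_inv_rev, hcinv]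
      exact ((hcent τ⁻¹ (inv_mem hτ)).eq).symm

/-- The canonical double cover of a faithful `4`-maniplex with non-bipartite
`0`- and `3`-faces is faithful. -/
theorem stmt10 {F : Type*} [Fintype F] (r : Fin 4 → Equiv.Perm F)
    (hM : IsManiplex 4 r) (hf : IsFaithful r)
    (hnb : ∀ i : Fin 4, ((i : ℕ) = 0 ∨ (i : ℕ) = 3) →
      ∀ u : F, ¬ FaceBipartite r {i}ᶜ (MFace r i u)) :
    IsFaithful (cdc r) := by
  obtain ⟨-, hinv, hfpf, -, hcm⟩ := hM
  have hone : ∀ x : ZMod 2, x + 1 + 1 = x := by decide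
  have hcdc : ∀ (j : Fin 4) (p : F × ZMod 2), cdc r j p = (r j p.1, p.2 + 1) :=
    fun _ _ => rfl
  have hcdc2 : ∀ j : Fin 4, cdc r j * cdc r j = 1 := by
    intro j
    apply Equiv.ext
    intro p
    simp only [Equiv.Perm.mul_apply, hcdc, hinv j, hone, Equiv.Perm.one_apply]
  have hcinv : ∀ j : Fin 4, (cdc r j)⁻¹ = cdc r j := fun j =>
    inv_eq_of_mul_eq_one_right (hcdc2 j)
  have hcommF : ∀ i j : Fin 4, 1 < |(i : ℤ) - (j : ℤ)| → ∀ x, r i (r j x) = r j (r i x) := by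
    intro i j hij x
    have h4 := (hcm i j hij).1 (r j (r i x))
    rw [hinv j (r i x), hinv i x] at h4
    exact h4
  have hcomm02 : Commute (cdc r 0) (cdc r 2) := by
    apply Equiv.ext
    intro p
    simp only [Equiv.Perm.mul_apply, hcdc, Prod.mk.injEq]
    exact ⟨hcommF 0 2 (by decide) p.1, trivial⟩
  have hcomm03 : Commute (cdc r 0) (cdc r 3) := by
    apply Equiv.ext
    intro p
    simp only [Equiv.Perm.mul_apply, hcdc, Prod.mk.injEq]
    exact ⟨hcommF 0 3 (by decide) p.1, trivial⟩
  intro q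
  obtain ⟨u, α⟩ := q
  refine Set.eq_singleton_iff_unique_mem.mpr ⟨Set.mem_iInter.mpr fun i => ⟨1, one_mem _, rfl⟩, ?_⟩
  rintro ⟨v, β⟩ hvβ
  have hproj : ∀ i : Fin 4, ∃ h ∈ Subgroup.closure (r '' ({i}ᶜ : Set (Fin 4))), v = h u := by
    intro i
    obtain ⟨g, hg, hge⟩ := Set.mem_iInter.mp hvβ i
    obtain ⟨h, hh, c, hc⟩ := lemA r _ hg
    exact ⟨h, hh, congrArg Prod.fst (hge.trans (hc (u, α)))⟩
  have hvu : v = u := by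
    have hv : v ∈ ⋂ i, MFace r i u := Set.mem_iInter.mpr fun i => by
      obtain ⟨h, hh, he⟩ := hproj i
      exact ⟨h, hh, he⟩
    rw [hf u] at hv
    exact hv
  obtain rfl := hvu.symm
  have hβcases : β = α ∨ β = α + 1 := by
    have hz : ∀ x y : ZMod 2, x = y ∨ x = y + 1 := by decide
    exact hz β α
  rcases hβcases with rfl | rfl
  · rfl
  exfalso
  obtain ⟨g1, hg1, hg1e⟩ := Set.mem_iInter.mp hvβ 1
  have hsetc : (({1}ᶜ : Set (Fin 4))) = {0, 2, 3} := by
    ext i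
    simp only [Set.mem_compl_iff, Set.mem_singleton_iff, Set.mem_insert_iff]
    fin_cases i <;> decide
  rw [hsetc, show cdc r '' ({0, 2, 3} : Set (Fin 4)) = {cdc r 0, cdc r 2, cdc r 3} from by
    rw [Set.image_insert_eq, Set.image_insert_eq, Set.image_singleton]] at hg1
  obtain ⟨τ, hτ, hgτ⟩ := central_decomp (cdc r 0) (cdc r 2) (cdc r 3) (hcdc2 0)
    hcomm02 hcomm03 g1 hg1
  have himg : cdc r '' ({2, 3} : Set (Fin 4)) = {cdc r 2, cdc r 3} := by
    rw [Set.image_insert_eq, Set.image_singleton]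
  have hτ' : τ ∈ Subgroup.closure (cdc r '' ({2, 3} : Set (Fin 4))) := by
    rw [himg]; exact hτ
  rcases hgτ with hgτ | hgτ
  · -- g1 = τ ∈ ⟨r̄₂, r̄₃⟩ : dihedral analysis
    have hτuα : τ (u, α) = (u, α + 1) := by rw [← hgτ]; exact hg1e.symm
    obtain ⟨k, hk⟩ := dihedral_decomp (cdc r 2) (cdc r 3) (hcdc2 2) (hcdc2 3) τ hτ
    have hshift : ∀ σ ∈ Subgroup.closure ({cdc r 2 * cdc r 3} :
        Set (Equiv.Perm (F × ZMod 2))), ∀ p : F × ZMod 2, (σ p).2 = p.2 := by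
      intro σ hσ
      induction hσ using Subgroup.closure_induction with
      | mem x hx =>
        intro p
        rw [Set.mem_singleton_iff] at hx
        subst hx
        simp only [Equiv.Perm.mul_apply, hcdc, hone]
      | one => intro p; rfl
      | mul x y _ _ hx hy => intro p; rw [Equiv.Perm.mul_apply, hx, hy]
      | inv x _ hx =>
        intro p
        have h5 := hx (x⁻¹ p)
        rw [Equiv.Perm.coe_inv, Equiv.apply_symm_apply] at h5
        exact h5.symm
    have hamem : cdc r 2 ∈ Subgroup.closure (cdc r '' ({2, 3} : Set (Fin 4))) :=
      Subgroup.subset_closure (Set.mem_image_of_mem _ (Set.mem_insert _ _))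
    have hbmem : cdc r 3 ∈ Subgroup.closure (cdc r '' ({2, 3} : Set (Fin 4))) :=
      Subgroup.subset_closure (Set.mem_image_of_mem _ (Set.mem_insert_of_mem _ rfl))
    have htmem : ∀ m : ℤ, (cdc r 2 * cdc r 3) ^ m ∈
        Subgroup.closure (cdc r '' ({2, 3} : Set (Fin 4))) := fun m =>
      Subgroup.zpow_mem _ (mul_mem hamem hbmem) m
    have hconjc : ∀ (j : Fin 4) (g : Equiv.Perm (F × ZMod 2)),
        g ∈ Subgroup.closure (cdc r '' ({2, 3} : Set (Fin 4))) →
        (g * cdc r j * g⁻¹) (u, α) = (u, α + 1) → False := by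
      intro j g hg heq
      obtain ⟨h, hh, cc, hcc⟩ := lemA r _ (inv_mem hg)
      have h2 : g (cdc r j (g⁻¹ (u, α))) = (u, α + 1) := by
        simpa only [Equiv.Perm.mul_apply] using heq
      have h1 : cdc r j (g⁻¹ (u, α)) = g⁻¹ (u, α + 1) := by
        rw [← h2, Equiv.Perm.coe_inv, Equiv.symm_apply_apply]
      rw [hcc, hcc, hcdc] at h1
      exact hfpf j _ (congrArg Prod.fst h1)
    rcases hk with hk | hk <;> rw [hk] at hτuα
    · have h1 := congrArg Prod.snd hτuα
      rw [hshift _ (Subgroup.zpow_mem _ (Subgroup.subset_closure (Set.mem_singleton _)) k)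
        (u, α)] at h1
      exact one_ne_zero (left_eq_add.mp h1)
    · rcases Int.even_or_odd k with ⟨m, hm⟩ | ⟨m, hm⟩
      · apply hconjc 2 ((cdc r 2 * cdc r 3) ^ m) (htmem m)
        have hrw : (cdc r 2 * cdc r 3) ^ m * cdc r 2 * ((cdc r 2 * cdc r 3) ^ m)⁻¹ =
            (cdc r 2 * cdc r 3) ^ k * cdc r 2 := by
          rw [mul_assoc, ← zpow_neg, akey _ _ (hcdc2 2) (hcdc2 3) (-m), neg_neg,
            ← mul_assoc, ← zpow_add, hm]
        rw [hrw]
        exact hτuα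
      · apply hconjc 3 ((cdc r 2 * cdc r 3) ^ m * cdc r 2)
          (mul_mem (htmem m) hamem)
        have hrw : ((cdc r 2 * cdc r 3) ^ m * cdc r 2) * cdc r 3 *
            (((cdc r 2 * cdc r 3) ^ m * cdc r 2))⁻¹ = (cdc r 2 * cdc r 3) ^ k * cdc r 2 := by
          rw [mul_inv_rev, hcinv 2, ← zpow_neg,
            mul_assoc ((cdc r 2 * cdc r 3) ^ m) (cdc r 2) (cdc r 3),
            mul_assoc, akey _ _ (hcdc2 2) (hcdc2 3) (-m), neg_neg,
            ← mul_assoc, ← mul_assoc, ← zpow_add_one, ← zpow_add,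
            show m + 1 + m = 2 * m + 1 from by ring, ← hm]
        rw [hrw]
        exact hτuα
  · -- g1 = r̄₀ * τ
    have hτuα : τ (u, α) = (r 0 u, α) := by
      have h1 : cdc r 0 (τ (u, α)) = (u, α + 1) := by
        rw [hgτ, Equiv.Perm.mul_apply] at hg1e
        exact hg1e.symm
      have h2 := congrArg (cdc r 0) h1
      rw [← Equiv.Perm.mul_apply, hcdc2 0, Equiv.Perm.one_apply, hcdc] at h2
      rw [h2]
      simp only [hone]
    obtain ⟨h, hh, cc, hcc⟩ := lemA r _ hτ'
    have hhu : h u = r 0 u := congrArg Prod.fst ((hcc (u, α)).symm.trans hτuα)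
    have hsub : ∀ i : Fin 4, i ≠ 2 → i ≠ 3 → ({2, 3} : Set (Fin 4)) ⊆ ({i}ᶜ : Set (Fin 4)) := by
      intro i h2 h3 x hx
      simp only [Set.mem_insert_iff, Set.mem_singleton_iff] at hx
      simp only [Set.mem_compl_iff, Set.mem_singleton_iff]
      rcases hx with rfl | rfl
      · exact fun he => h2 he.symm
      · exact fun he => h3 he.symm
    have hmem : r 0 u ∈ ⋂ i, MFace r i u := by
      apply Set.mem_iInter.mpr
      intro i
      fin_cases i
      · exact ⟨h, Subgroup.closure_mono (Set.image_mono (hsub 0 (by decide) (by decide))) hh,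
          hhu.symm⟩
      · exact ⟨h, Subgroup.closure_mono (Set.image_mono (hsub 1 (by decide) (by decide))) hh,
          hhu.symm⟩
      · exact ⟨r 0, Subgroup.subset_closure ⟨0, by simp, rfl⟩, rfl⟩
      · exact ⟨r 0, Subgroup.subset_closure ⟨0, by simp, rfl⟩, rfl⟩
    rw [hf u] at hmem
    exact hfpf 0 u hmem
end

section
/- Let M = (F, r) be a faithful maniplex of rank 4 in which every 0-face and every 3-face is non-bipartite, and let M̄ = (F × ZMod 2, r̄) be its canonical double cover (which under these hypotheses is a maniplex of rank 4). Then M̄ does not satisfy the component intersection property. -/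
section AuxStmt11

variable {F : Type*}

private lemma cdcApply {n : ℕ} (r : Fin n → Equiv.Perm F) (i : Fin n) (v : F) (b : ZMod 2) :
    cdc r i (v, b) = (r i v, b + 1) := rfl

private lemma permApplyInvSelf {α : Type*} (e : Equiv.Perm α) (x : α) : e (e⁻¹ x) = x :=
  e.apply_symm_apply x

private lemma permInvApplySelf {α : Type*} (e : Equiv.Perm α) (x : α) : e⁻¹ (e x) = x :=
  e.symm_apply_apply x

/-- Elements of the closure of the cover generators commute with the deck transformation. -/
private lemma deck {n : ℕ} (r : Fin n → Equiv.Perm F) (J : Set (Fin n))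
    {g : Equiv.Perm (F × ZMod 2)} (hg : g ∈ Subgroup.closure (cdc r '' J)) :
    ∀ (v : F) (b : ZMod 2), g (v, b + 1) = ((g (v, b)).1, (g (v, b)).2 + 1) := by
  induction hg using Subgroup.closure_induction with
  | mem x hx =>
    obtain ⟨i, _, rfl⟩ := hx
    intro v b; rfl
  | one => intro v b; rfl
  | mul x y hx hy ihx ihy =>
    intro v b
    have h1 : (x * y) (v, b + 1) = x (y (v, b + 1)) := rfl
    rw [h1, ihy v b, ihx]
    rfl
  | inv x hx ihx =>
    intro v b
    apply x.injective
    have h2 : x (x⁻¹ (v, b)) = (v, b) := permApplyInvSelf x _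
    have h3 := ihx (x⁻¹ (v, b)).1 (x⁻¹ (v, b)).2
    rw [Prod.mk.eta] at h3
    rw [permApplyInvSelf x, h3, h2]

/-- Elements of the base closure lift to the cover closure. -/
private lemma liftClosure {n : ℕ} (r : Fin n → Equiv.Perm F) (J : Set (Fin n))
    {g : Equiv.Perm F} (hg : g ∈ Subgroup.closure (r '' J)) :
    ∃ gb ∈ Subgroup.closure (cdc r '' J), ∀ (v : F) (b : ZMod 2), (gb (v, b)).1 = g v := by
  induction hg using Subgroup.closure_induction with
  | mem x hx =>
    obtain ⟨i, hi, rfl⟩ := hx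
    exact ⟨cdc r i, Subgroup.subset_closure ⟨i, hi, rfl⟩, fun v b => rfl⟩
  | one => exact ⟨1, one_mem _, fun v b => rfl⟩
  | mul x y hx hy ihx ihy =>
    obtain ⟨a, ha, hfa⟩ := ihx
    obtain ⟨c, hc, hfc⟩ := ihy
    refine ⟨a * c, mul_mem ha hc, fun v b => ?_⟩
    have h1 : (a * c) (v, b) = a (c (v, b)) := rfl
    have h2 := hfa (c (v, b)).1 (c (v, b)).2
    rw [Prod.mk.eta] at h2
    rw [h1, h2, hfc]
    rfl
  | inv x hx ihx =>
    obtain ⟨a, ha, hfa⟩ := ihx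
    refine ⟨a⁻¹, inv_mem ha, fun v b => ?_⟩
    apply x.injective
    have h2 := hfa (a⁻¹ (v, b)).1 (a⁻¹ (v, b)).2
    rw [Prod.mk.eta, permApplyInvSelf a] at h2
    rw [← h2, permApplyInvSelf x]

/-- If both lifts of a flag lie in an orbit of the cover, then `(u,1)` is in the orbit. -/
private lemma bothSheets {n : ℕ} (r : Fin n → Equiv.Perm F) (J : Set (Fin n)) (u x : F)
    (h0 : ((x, 0) : F × ZMod 2) ∈ MOrbit (cdc r) J (u, 0))
    (h1 : ((x, 1) : F × ZMod 2) ∈ MOrbit (cdc r) J (u, 0)) :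
    ((u, 1) : F × ZMod 2) ∈ MOrbit (cdc r) J (u, 0) := by
  obtain ⟨g, hg, hxg⟩ := h0
  obtain ⟨h, hh, hxh⟩ := h1
  refine ⟨g⁻¹ * h, mul_mem (inv_mem hg) hh, ?_⟩
  have e1 : (g⁻¹ * h) (u, 0) = g⁻¹ (h (u, 0)) := rfl
  have e2 : g⁻¹ ((x, 0) : F × ZMod 2) = (u, 0) := by rw [hxg]; exact permInvApplySelf g _
  have e3 := deck r J (inv_mem hg) x 0
  rw [e2] at e3
  have h4 : ((x, 1) : F × ZMod 2) = (x, 0 + 1) := by norm_num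
  rw [e1, ← hxh, h4, e3]
  norm_num

/-- If the `i`-face of `u` is non-bipartite, then `(u,1)` lies in the cover `i`-face of `(u,0)`. -/
private lemma coverMem {n : ℕ} (r : Fin n → Equiv.Perm F) (i : Fin n) (u : F)
    (hnb : ¬ FaceBipartite r {i}ᶜ (MFace r i u)) :
    ((u, 1) : F × ZMod 2) ∈ MFace (cdc r) i (u, 0) := by
  classical
  by_contra hcon
  refine hnb ⟨fun x => if ((x, 0) : F × ZMod 2) ∈ MFace (cdc r) i ((u, 0) : F × ZMod 2)
      then 0 else 1, ?_⟩
  intro j hj x hx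
  beta_reduce
  have hnotboth : ∀ y : F, ((y, 0) : F × ZMod 2) ∈ MFace (cdc r) i (u, 0) →
      ((y, 1) : F × ZMod 2) ∈ MFace (cdc r) i (u, 0) → False := by
    intro y hy0 hy1
    exact hcon (bothSheets r _ u y hy0 hy1)
  have hstep : ∀ (y : F) (a : ZMod 2), ((y, a) : F × ZMod 2) ∈ MFace (cdc r) i (u, 0) →
      ((r j y, a + 1) : F × ZMod 2) ∈ MFace (cdc r) i (u, 0) := by
    rintro y a ⟨g, hg, hy⟩
    refine ⟨cdc r j * g, mul_mem (Subgroup.subset_closure ⟨j, hj, rfl⟩) hg, ?_⟩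
    have : (cdc r j * g) ((u, 0) : F × ZMod 2) = cdc r j (g (u, 0)) := rfl
    rw [this, ← hy]
    rfl
  have hex : ∃ a : ZMod 2, ((x, a) : F × ZMod 2) ∈ MFace (cdc r) i (u, 0) := by
    obtain ⟨g, hg, hxg⟩ := hx
    obtain ⟨gb, hgb, hfst⟩ := liftClosure r ({i}ᶜ) hg
    refine ⟨(gb ((u, 0) : F × ZMod 2)).2, gb, hgb, ?_⟩
    rw [hxg, ← hfst u 0]
  obtain ⟨a, ha⟩ := hex
  rcases (show ∀ z : ZMod 2, z = 0 ∨ z = 1 by decide) a with rfl | rfl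
  · have h1 : ((r j x, 1) : F × ZMod 2) ∈ MFace (cdc r) i (u, 0) := by
      have := hstep x 0 ha
      norm_num at this
      exact this
    rw [if_pos ha, if_neg (fun h0 => hnotboth (r j x) h0 h1)]
    norm_num
  · have hx0 : ¬ ((x, 0) : F × ZMod 2) ∈ MFace (cdc r) i (u, 0) :=
      fun h0 => hnotboth x h0 ha
    have h1 : ((r j x, 0) : F × ZMod 2) ∈ MFace (cdc r) i (u, 0) := by
      have := hstep x 1 ha
      norm_num at this
      exact this
    rw [if_neg hx0, if_pos h1]
    decide

section TwoGen

variable (r : Fin 4 → Equiv.Perm F) (hinv : ∀ (i : Fin 4) (u : F), r i (r i u) = u)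
include hinv

private lemma rmul_self (i : Fin 4) : r i * r i = 1 :=
  Equiv.ext fun u => hinv i u

private lemma rRel (m : ℤ) :
    r 1 * (r 1 * r 2) ^ m = ((r 1 * r 2) ^ m)⁻¹ * r 1 := by
  have h1 : (r 1)⁻¹ = r 1 := inv_eq_of_mul_eq_one_right (rmul_self r hinv 1)
  have h2 : (r 2)⁻¹ = r 2 := inv_eq_of_mul_eq_one_right (rmul_self r hinv 2)
  have hconj : MulAut.conj (r 1) (r 1 * r 2) = (r 1 * r 2)⁻¹ := by
    simp only [MulAut.conj_apply, mul_inv_rev, h1, h2]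
    calc r 1 * (r 1 * r 2) * r 1 = (r 1 * r 1) * r 2 * r 1 := by group
    _ = r 2 * r 1 := by rw [rmul_self r hinv 1]; group
  have key : MulAut.conj (r 1) ((r 1 * r 2) ^ m) = ((r 1 * r 2) ^ m)⁻¹ := by
    rw [map_zpow, hconj, inv_zpow]
  simp only [MulAut.conj_apply, h1] at key
  calc r 1 * (r 1 * r 2) ^ m = (r 1 * (r 1 * r 2) ^ m * r 1) * r 1 := by
        rw [mul_assoc, rmul_self r hinv 1, mul_one]
  _ = ((r 1 * r 2) ^ m)⁻¹ * r 1 := by rw [key]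

private lemma rRelMem {c : Equiv.Perm F} (hc : c ∈ Subgroup.zpowers (r 1 * r 2)) :
    r 1 * c = c⁻¹ * r 1 := by
  obtain ⟨m, rfl⟩ := Subgroup.mem_zpowers_iff.mp hc
  exact rRel r hinv m

/-- Structure of elements of the cover subgroup generated by ranks 1 and 2. -/
private lemma structTwo {g : Equiv.Perm (F × ZMod 2)}
    (hg : g ∈ Subgroup.closure (cdc r '' ({1, 2} : Set (Fin 4)))) :
    (∃ c ∈ Subgroup.zpowers (r 1 * r 2), ∀ (v : F) (b : ZMod 2), g (v, b) = (c v, b)) ∨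
    (∃ c ∈ Subgroup.zpowers (r 1 * r 2), ∀ (v : F) (b : ZMod 2),
      g (v, b) = (c (r 1 v), b + 1)) := by
  have h1 : (r 1)⁻¹ = r 1 := inv_eq_of_mul_eq_one_right (rmul_self r hinv 1)
  induction hg using Subgroup.closure_induction with
  | mem x hx =>
    obtain ⟨i, hi, rfl⟩ := hx
    rcases hi with hi | hi
    · subst hi
      exact Or.inr ⟨1, one_mem _, fun v b => rfl⟩
    · rw [Set.mem_singleton_iff] at hi
      subst hi
      refine Or.inr ⟨(r 1 * r 2)⁻¹, inv_mem (Subgroup.mem_zpowers _), fun v b => ?_⟩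
      have : ((r 1 * r 2)⁻¹) (r 1 v) = r 2 v := by
        apply (r 1 * r 2).injective
        have e : (r 1 * r 2) (r 2 v) = r 1 v := by
          show r 1 (r 2 (r 2 v)) = r 1 v
          rw [hinv 2 v]
        rw [permApplyInvSelf (r 1 * r 2), e]
      rw [this]
      rfl
  | one => exact Or.inl ⟨1, one_mem _, fun v b => rfl⟩
  | mul x y hx hy ihx ihy =>
    have happ : ∀ (v : F) (b : ZMod 2), (x * y) (v, b) = x (y (v, b)) := fun v b => rfl
    rcases ihx with ⟨cx, hcx, hfx⟩ | ⟨cx, hcx, hfx⟩ <;>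
      rcases ihy with ⟨cy, hcy, hfy⟩ | ⟨cy, hcy, hfy⟩
    · exact Or.inl ⟨cx * cy, mul_mem hcx hcy, fun v b => by
        rw [happ, hfy, hfx]; rfl⟩
    · exact Or.inr ⟨cx * cy, mul_mem hcx hcy, fun v b => by
        rw [happ, hfy, hfx]; rfl⟩
    · refine Or.inr ⟨cx * cy⁻¹, mul_mem hcx (inv_mem hcy), fun v b => ?_⟩
      rw [happ, hfy, hfx]
      have : r 1 (cy v) = (cy⁻¹) (r 1 v) := by
        have := rRelMem r hinv hcy
        calc r 1 (cy v) = (r 1 * cy) v := rfl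
        _ = (cy⁻¹ * r 1) v := by rw [this]
        _ = (cy⁻¹) (r 1 v) := rfl
      rw [this]
      rfl
    · refine Or.inl ⟨cx * cy⁻¹, mul_mem hcx (inv_mem hcy), fun v b => ?_⟩
      rw [happ, hfy, hfx]
      have e1 : r 1 (cy (r 1 v)) = (cy⁻¹) v := by
        have hr := rRelMem r hinv hcy
        calc r 1 (cy (r 1 v)) = (r 1 * cy * r 1) v := rfl
        _ = (cy⁻¹ * r 1 * r 1) v := by rw [hr]
        _ = (cy⁻¹ * (r 1 * r 1)) v := by rw [mul_assoc]
        _ = (cy⁻¹) v := by rw [rmul_self r hinv 1, mul_one]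
      rw [e1]
      have : b + 1 + 1 = b := by
        rcases (show ∀ z : ZMod 2, z = 0 ∨ z = 1 by decide) b with rfl | rfl <;> decide
      rw [this]
      rfl
  | inv x hx ihx =>
    rcases ihx with ⟨c, hc, hf⟩ | ⟨c, hc, hf⟩
    · refine Or.inl ⟨c⁻¹, inv_mem hc, fun v b => ?_⟩
      apply x.injective
      rw [permApplyInvSelf x, hf, permApplyInvSelf c]
    · refine Or.inr ⟨c, hc, fun v b => ?_⟩
      apply x.injective
      rw [permApplyInvSelf x, hf]
      have hr := rRelMem r hinv hc
      have e1 : r 1 (c (r 1 v)) = (c⁻¹) v := by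
        calc r 1 (c (r 1 v)) = (r 1 * c * r 1) v := rfl
        _ = (c⁻¹ * r 1 * r 1) v := by rw [hr]
        _ = (c⁻¹ * (r 1 * r 1)) v := by rw [mul_assoc]
        _ = (c⁻¹) v := by rw [rmul_self r hinv 1, mul_one]
      rw [e1, permApplyInvSelf c]
      have : b + 1 + 1 = b := by
        rcases (show ∀ z : ZMod 2, z = 0 ∨ z = 1 by decide) b with rfl | rfl <;> decide
      rw [this]

/-- `s^m ∘ r 1` is fixed-point free. -/
private lemma fpfTwo (hfix : ∀ (i : Fin 4) (u : F), r i u ≠ u)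
    {c : Equiv.Perm F} (hc : c ∈ Subgroup.zpowers (r 1 * r 2)) (v : F) :
    c (r 1 v) ≠ v := by
  obtain ⟨m, rfl⟩ := Subgroup.mem_zpowers_iff.mp hc
  set s : Equiv.Perm F := r 1 * r 2 with hs
  have hz : ∀ (a b : ℤ) (w : F), (s ^ a) ((s ^ b) w) = (s ^ (a + b)) w := by
    intro a b w
    rw [zpow_add]
    rfl
  have hcomm : ∀ (k : ℤ) (w : F), r 1 ((s ^ k) w) = (s ^ (-k)) (r 1 w) := by
    intro k w
    have := rRel r hinv k
    calc r 1 ((s ^ k) w) = (r 1 * s ^ k) w := rfl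
    _ = ((s ^ k)⁻¹ * r 1) w := by rw [this]
    _ = (s ^ (-k)) (r 1 w) := by rw [← zpow_neg]; rfl
  intro h
  rcases Int.even_or_odd m with ⟨j, hj⟩ | ⟨j, hj⟩
  · subst hj
    have e1 : (s ^ j) (r 1 v) = (s ^ (-j)) v := by
      have h5 := congrArg (fun y => (s ^ (-j)) y) h
      rw [hz] at h5
      rw [show -j + (j + j) = j by ring] at h5
      exact h5
    have e2 : r 1 ((s ^ (-j)) v) = (s ^ (-j)) v := by
      rw [hcomm (-j) v, neg_neg, e1]
    exact hfix 1 _ e2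
  · subst hj
    have e1 : (s ^ (j + 1)) (r 1 v) = (s ^ (-j)) v := by
      have h5 := congrArg (fun y => (s ^ (-j)) y) h
      rw [hz] at h5
      rw [show -j + (2 * j + 1) = j + 1 by ring] at h5
      exact h5
    have e2 : r 1 ((s ^ (-j)) v) = (s ^ j) (r 1 v) := by
      rw [hcomm (-j) v, neg_neg]
    have e3 : s (r 1 ((s ^ (-j)) v)) = (s ^ (-j)) v := by
      rw [e2]
      have h6 : s ((s ^ j) (r 1 v)) = (s ^ (j + 1)) (r 1 v) := by
        have h7 := hz 1 j (r 1 v)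
        rw [zpow_one] at h7
        rw [h7, add_comm]
      rw [h6, e1]
    have e4 : r 2 (r 1 ((s ^ (-j)) v)) = r 1 ((s ^ (-j)) v) := by
      apply (r 1).injective
      calc r 1 (r 2 (r 1 ((s ^ (-j)) v))) = s (r 1 ((s ^ (-j)) v)) := rfl
      _ = (s ^ (-j)) v := e3
      _ = r 1 (r 1 ((s ^ (-j)) v)) := (hinv 1 _).symm
    exact hfix 2 _ e4

end TwoGen

end AuxStmt11

/-- The canonical double cover of a faithful `4`-maniplex with non-bipartite
`0`- and `3`-faces does not satisfy the component intersection property. -/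
theorem stmt11 {F : Type*} [Fintype F] (r : Fin 4 → Equiv.Perm F)
    (hM : IsManiplex 4 r) (hf : IsFaithful r)
    (hnb : ∀ i : Fin 4, ((i : ℕ) = 0 ∨ (i : ℕ) = 3) →
      ∀ u : F, ¬ FaceBipartite r {i}ᶜ (MFace r i u)) :
    ¬ HasCIP (cdc r) := by
  intro hcip
  obtain ⟨hne, hinv, hfix, htrans, hcm⟩ := hM
  obtain ⟨u⟩ := hne
  have hset : {m : Fin 4 | m ∉ Set.range (![0, 3] : Fin 2 → Fin 4)} = ({1, 2} : Set (Fin 4)) := by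
    ext m; fin_cases m <;> simp [Fin.exists_fin_two]
  set j : Fin 2 → Fin 4 := ![0, 3] with hjdef
  set H : Fin 2 → Set (F × ZMod 2) := fun l => MFace (cdc r) (j l) ((u, 0) : F × ZMod 2)
    with hHdef
  have hinj : Function.Injective j := by decide
  have hface : ∀ l, ∃ w : F × ZMod 2, H l = MFace (cdc r) (j l) w := fun l => ⟨(u, 0), rfl⟩
  have hmem0 : ∀ l, ((u, 0) : F × ZMod 2) ∈ H l := fun l => ⟨1, one_mem _, rfl⟩
  have hmem1 : ∀ l, ((u, 1) : F × ZMod 2) ∈ H l := by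
    intro l
    fin_cases l
    · exact coverMem r 0 u (hnb 0 (Or.inl rfl) u)
    · exact coverMem r 3 u (hnb 3 (Or.inr rfl) u)
  have hres := hcip 2 j H hinj hface (fun l m => ⟨(u, 0), hmem0 l, hmem0 m⟩)
    (u, 0) (u, 1) (Set.mem_iInter.2 hmem0) (Set.mem_iInter.2 hmem1)
  rw [show {m : Fin 4 | m ∉ Set.range j} = ({1, 2} : Set (Fin 4)) from hset] at hres
  obtain ⟨g, hg, heq⟩ := hres
  rcases structTwo r hinv hg with ⟨c, hc, hf⟩ | ⟨c, hc, hf⟩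
  · rw [hf u 0] at heq
    have : (1 : ZMod 2) = 0 := congrArg Prod.snd heq
    exact one_ne_zero this
  · rw [hf u 0] at heq
    have : u = c (r 1 u) := congrArg Prod.fst heq
    exact fpfTwo r hinv hfix hc u this.symm
end
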